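/- arXiv:1804.04504 — 2 statements merged into one kernel-verified Lean document; each statement's English description precedes it below -/
import Mathlib

section
/- For even n = 2k with n ≥ 6, in any schedule with guaranteed rest time k-2 and games-played difference index 1, every team plays exactly once in every round (where round i consists of games at positions (i-1)k + 1 through ik). -/
/-- `f` lists the games of a single round-robin tournament on `n` teams:
positions `0, ..., N-1` are in bijection with the unordered pairs of distinct teams. -/
def isSchedule (n N : ℕ) (f : ℕ → Sym2 (Fin n)) : Prop :=
  (∀ i, i < N → ¬ (f i).IsDiag) ∧
  ∀ p : Sym2 (Fin n), ¬ p.IsDiag → ∃! i, i < N ∧ f i = p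

/-- The schedule has guaranteed rest time at least `b`: any two games involving a
common team `t` are separated by at least `b` games not involving `t`. -/
def hasRest (n N : ℕ) (f : ℕ → Sym2 (Fin n)) (b : ℕ) : Prop :=
  ∀ t : Fin n, ∀ i j, i < j → j < N → t ∈ f i → t ∈ f j →
    b ≤ ((Finset.Ioo i j).filter (fun l => t ∉ f l)).card

/-- Number of games played by team `t` in the first `m` games. -/
def played (n : ℕ) (f : ℕ → Sym2 (Fin n)) (t : Fin n) (m : ℕ) : ℕ :=
  ((Finset.range m).filter (fun i => t ∈ f i)).card

/-- The games-played difference index is at most `p`. -/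
def gpLe (n N : ℕ) (f : ℕ → Sym2 (Fin n)) (p : ℕ) : Prop :=
  ∀ m, m ≤ N → ∀ t1 t2 : Fin n, played n f t1 m ≤ played n f t2 m + p

/-- The rest of team `t` going into the game at position `i`: the number of games since
`t`'s previous game, where all teams play an imaginary game one slot before game `0`. -/
def rest (n : ℕ) (f : ℕ → Sym2 (Fin n)) (t : Fin n) (i : ℕ) : ℕ :=
  ((Finset.range i).filter (fun j => ∀ l, j ≤ l → l < i → t ∉ f l)).card

/-- The rest difference index is at most `d`. -/
def rdLe (n N : ℕ) (f : ℕ → Sym2 (Fin n)) (d : ℕ) : Prop :=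
  ∀ i, i < N → ∀ t1 t2 : Fin n, t1 ∈ f i → t2 ∈ f i →
    rest n f t1 i ≤ rest n f t2 i + d

/-!
After `m` games the teams have played `2m` games in total. If `2m = n j` for `n` teams and
any two teams' counts differ by at most one, every team has played exactly `j` games. Applied
at the ends of consecutive rounds (`m = (i-1)k` and `m = ik`, with `n = 2k`), every team plays
exactly one game in round `i`.
-/

open Finset

lemma Nat.eq_of_sum_eq_card_mul_of_le_add_one {ι : Type*} [Fintype ι] {v : ι → ℕ} {c : ℕ}
    (hsum : ∑ a, v a = Fintype.card ι * c) (hv : ∀ a b, v a ≤ v b + 1) (a : ι) : v a = c := by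
  have hc : ∑ _b : ι, c = Fintype.card ι * c := by simp
  by_contra hne
  rcases Nat.lt_or_gt_of_ne hne with hlt | hgt
  · have : ∑ b, v b < ∑ _b : ι, c :=
      sum_lt_sum (fun b _ => by have := hv b a; omega) ⟨a, mem_univ a, hlt⟩
    omega
  · have : ∑ _b : ι, c < ∑ b, v b :=
      sum_lt_sum (fun b _ => by have := hv a b; omega) ⟨a, mem_univ a, hgt⟩
    omega

section Schedule

variable {n : ℕ} (f : ℕ → Sym2 (Fin n))

lemma sum_played {N m : ℕ} (hdiag : ∀ i, i < N → ¬ (f i).IsDiag) (hm : m ≤ N) :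
    ∑ t, played n f t m = 2 * m := by
  have hpair : ∀ i ∈ range m, #{t | t ∈ f i} = 2 := fun i hi => by
    rw [← Sym2.card_toFinset_of_not_isDiag _ (hdiag i ((mem_range.mp hi).trans_le hm))]
    congr 1
    ext t
    simp [Sym2.mem_toFinset]
  simp only [played, card_filter]
  rw [sum_comm]
  simp only [← card_filter, sum_congr rfl hpair, sum_const, card_range, smul_eq_mul, mul_comm]

lemma played_eq_of_gpLe_one {N m j : ℕ} (hdiag : ∀ i, i < N → ¬ (f i).IsDiag)
    (hgp : gpLe n N f 1) (hm : m ≤ N) (hmj : 2 * m = n * j) (t : Fin n) :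
    played n f t m = j :=
  Nat.eq_of_sum_eq_card_mul_of_le_add_one (by rw [sum_played f hdiag hm, hmj, Fintype.card_fin])
    (hgp m hm) t

lemma played_add_card_filter_Ico (t : Fin n) {a b : ℕ} (hab : a ≤ b) :
    played n f t a + #{l ∈ Ico a b | t ∈ f l} = played n f t b := by
  simp only [played, card_filter]
  exact sum_range_add_sum_Ico _ hab

end Schedule

theorem stmt7_general (k : ℕ) (f : ℕ → Sym2 (Fin (2*k)))
    (hf : isSchedule (2*k) (2*k*(2*k-1)/2) f)
    (hgp : gpLe (2*k) (2*k*(2*k-1)/2) f 1) :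
    ∀ i, 1 ≤ i → i ≤ 2*k - 1 →
      ∀ t : Fin (2*k), ((Finset.Ico ((i-1)*k) (i*k)).filter (fun l => t ∈ f l)).card = 1 := by
  intro i hi1 hi2 t
  have hN : 2*k*(2*k-1)/2 = (2*k-1)*k := by
    rw [mul_assoc, Nat.mul_div_cancel_left _ two_pos, mul_comm]
  have hplayed : ∀ j ≤ 2*k - 1, played (2*k) f t (j*k) = j := fun j hj =>
    played_eq_of_gpLe_one f hf.1 hgp (hN ▸ Nat.mul_le_mul_right k hj) (by ring) t
  have hround := played_add_card_filter_Ico f t (Nat.mul_le_mul_right k (Nat.sub_le i 1))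
  rw [hplayed i hi2, hplayed (i-1) (by omega)] at hround
  omega

/-- For even `n = 2k ≥ 6`, in any schedule with guaranteed rest time `k-2` and
games-played difference index `1`, every team plays exactly once in every round
(round `i`, for `1 ≤ i ≤ n-1`, consists of games at 0-indexed positions
`(i-1)k, ..., ik - 1`). -/
theorem stmt7 (k : ℕ) (hk : 3 ≤ k) (f : ℕ → Sym2 (Fin (2*k)))
    (hf : isSchedule (2*k) (2*k*(2*k-1)/2) f)
    (hrest : hasRest (2*k) (2*k*(2*k-1)/2) f (k-2))
    (hgp : gpLe (2*k) (2*k*(2*k-1)/2) f 1) :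
    ∀ i, 1 ≤ i → i ≤ 2*k - 1 →
      ∀ t : Fin (2*k), ((Finset.Ico ((i-1)*k) (i*k)).filter (fun l => t ∈ f l)).card = 1 :=
  stmt7_general k f hf hgp
end

section
/- For even n = 2k with n ≥ 4, the schedule generated by the circle design has games-played difference index 1: after any prefix of the schedule, the numbers of games played by any two teams differ by at most 1. -/
/-- Circle design for `n = 2k` teams (0-indexed teams; team `t` is team `t+1` of the
paper): team `0` is fixed at the top-left; the other `2k-1` teams occupy cyclic
positions `0, ..., 2k-2` (top-row columns `1..k-1` left to right, then bottom-row
columns `k-1` down to `0`), each rotating one step per round.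
`circleTeamE k hk r c` is the team at cyclic position `c` in round `r`. -/
def circleTeamE (k : ℕ) (hk : 0 < k) (r c : ℕ) : Fin (2*k) :=
  ⟨(c + (2*k-1) - r % (2*k-1)) % (2*k-1) + 1, by
    have h := Nat.mod_lt (c + (2*k-1) - r % (2*k-1)) (y := 2*k-1) (by omega)
    omega⟩

/-- The `i`-th game (0-indexed) of the asynchronous circle-design schedule for `2k`
teams: round `i / k`, column `i % k`, columns read left to right. -/
def circleGameE (k : ℕ) (hk : 0 < k) (i : ℕ) : Sym2 (Fin (2*k)) :=
  if i % k = 0 then s(⟨0, by omega⟩, circleTeamE k hk (i / k) (2*k-2))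
  else s(circleTeamE k hk (i / k) (i % k - 1), circleTeamE k hk (i / k) (2*k-2 - i % k))

/-!
Each block of `k` consecutive games of the circle design is a round in which every team plays
exactly once. Hence after `q` full rounds every team has played exactly `q` games, and after a
prefix of length between `q k` and `(q + 1) k` every count lies in `{q, q + 1}`.
-/

open Finset

section Rounds

variable {n : ℕ} (f : ℕ → Sym2 (Fin n))

def PlaysOncePerRound (k : ℕ) : Prop :=
  ∀ (t : Fin n) (r : ℕ), ∃! c, c < k ∧ t ∈ f (r * k + c)

theorem played_mono (t : Fin n) : Monotone (played n f t) := fun _ _ h =>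
  card_le_card (filter_subset_filter _ (range_subset_range.2 h))

theorem played_add (t : Fin n) (m l : ℕ) :
    played n f t (m + l) = played n f t m + #{c ∈ range l | t ∈ f (m + c)} := by
  simp only [played, card_filter, sum_range_add]

variable {f}

theorem PlaysOncePerRound.played_mul {k : ℕ} (h : PlaysOncePerRound f k) (t : Fin n) (q : ℕ) :
    played n f t (q * k) = q := by
  induction q with
  | zero => simp [played]
  | succ q ih =>
    obtain ⟨c, hc, hc_unique⟩ := h t q
    have hround : #{c ∈ range k | t ∈ f (q * k + c)} = 1 :=
      card_eq_one.2 ⟨c, by ext d; simpa using ⟨fun hd => hc_unique d hd, fun hd => hd ▸ hc⟩⟩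
    rw [Nat.succ_mul, played_add, ih, hround]

theorem PlaysOncePerRound.gpLe_one {k : ℕ} (hk : 0 < k) (h : PlaysOncePerRound f k) (N : ℕ) :
    gpLe n N f 1 := by
  intro m _ t₁ t₂
  have hm : m / k * k ≤ m := Nat.div_mul_le_self m k
  calc played n f t₁ m ≤ played n f t₁ (m / k * k + k) :=
        played_mono f t₁ (Nat.lt_div_mul_add hk).le
    _ = m / k + 1 := by rw [← Nat.succ_mul, h.played_mul]
    _ = played n f t₂ (m / k * k) + 1 := by rw [h.played_mul]
    _ ≤ played n f t₂ m + 1 := by gcongr; exact played_mono f t₂ hm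

end Rounds

theorem Nat.add_sub_mod_eq_iff {M a p v : ℕ} (hp : p < M) (ha : a < M) (hv : v < M) :
    (p + M - a) % M = v ↔ p = (v + a) % M := by
  have h₁ : (p + M - a) % M = if a ≤ p then p - a else p + M - a := by
    split_ifs
    · rw [show p + M - a = p - a + M by omega, Nat.add_mod_right, Nat.mod_eq_of_lt (by omega)]
    · exact Nat.mod_eq_of_lt (by omega)
  have h₂ : (v + a) % M = if v + a < M then v + a else v + a - M := by
    split_ifs
    · exact Nat.mod_eq_of_lt ‹_›
    · rw [Nat.mod_eq_sub_mod (by omega), Nat.mod_eq_of_lt (by omega)]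
  rw [h₁, h₂]
  split_ifs <;> omega

section CircleDesign

variable {k : ℕ} (hk : 0 < k)

/-- Cyclic position of team `t` in round `r`; meaningless for the fixed team `0`. -/
def circlePos (k : ℕ) (t : Fin (2 * k)) (r : ℕ) : ℕ := (t.val - 1 + r) % (2 * k - 1)

/-- Position `p < k - 1` is column `p + 1` of the top row, position `p ≥ k - 1` is column
`2k - 2 - p` of the bottom row; the fixed team `0` plays in column `0`. -/
def circleColumn (k : ℕ) (t : Fin (2 * k)) (r : ℕ) : ℕ :=
  if t.val = 0 ∨ circlePos k t r = 2 * k - 2 then 0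
  else if circlePos k t r < k - 1 then circlePos k t r + 1
  else 2 * k - 2 - circlePos k t r

theorem circlePos_lt (t : Fin (2 * k)) (r : ℕ) : circlePos k t r < 2 * k - 1 :=
  Nat.mod_lt _ (by have := t.isLt; omega)

theorem circleColumn_lt (t : Fin (2 * k)) (r : ℕ) : circleColumn k t r < k := by
  have := circlePos_lt t r
  unfold circleColumn
  split_ifs <;> omega

theorem circleTeamE_eq_iff {r p : ℕ} (hp : p < 2 * k - 1) (t : Fin (2 * k)) :
    circleTeamE k hk r p = t ↔ t.val ≠ 0 ∧ p = circlePos k t r := by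
  have hrot : (p + (2 * k - 1) - r % (2 * k - 1)) % (2 * k - 1) = t.val - 1 ↔
      p = circlePos k t r := by
    rw [circlePos, ← Nat.add_mod_mod]
    exact Nat.add_sub_mod_eq_iff hp (Nat.mod_lt r (by omega)) (by omega)
  rw [Fin.ext_iff]
  simp only [circleTeamE]
  constructor
  · intro h
    exact ⟨by omega, hrot.1 (by omega)⟩
  · rintro ⟨ht, hpos⟩
    rw [hrot.2 hpos]
    omega

theorem mem_circleGameE_iff {r c : ℕ} (hc : c < k) (t : Fin (2 * k)) :
    t ∈ circleGameE k hk (r * k + c) ↔ c = circleColumn k t r := by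
  have hmod : (r * k + c) % k = c := by rw [Nat.mul_comm, Nat.mul_add_mod, Nat.mod_eq_of_lt hc]
  have hdiv : (r * k + c) / k = r := by
    rw [Nat.mul_comm, Nat.mul_add_div hk, Nat.div_eq_of_lt hc, Nat.add_zero]
  have hpos := circlePos_lt t r
  simp only [circleGameE, hmod, hdiv]
  split_ifs
  · rw [Sym2.mem_iff, Fin.eq_mk_iff_val_eq, eq_comm (a := t), circleTeamE_eq_iff hk (by omega)]
    unfold circleColumn
    split_ifs <;> omega
  · rw [Sym2.mem_iff, eq_comm (a := t), eq_comm (a := t), circleTeamE_eq_iff hk (by omega),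
      circleTeamE_eq_iff hk (by omega)]
    unfold circleColumn
    split_ifs <;> omega

theorem circleGameE_playsOncePerRound : PlaysOncePerRound (circleGameE k hk) k :=
  fun t r => ⟨circleColumn k t r, ⟨circleColumn_lt t r, (mem_circleGameE_iff hk
    (circleColumn_lt t r) t).2 rfl⟩, fun _ hc => (mem_circleGameE_iff hk hc.1 t).1 hc.2⟩

end CircleDesign

/-- For even `n = 2k ≥ 4`, the circle-design schedule has games-played difference
index `1`: after any prefix, any two teams' game counts differ by at most `1`. -/
theorem stmt10 (k : ℕ) (hk : 2 ≤ k) :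
    gpLe (2*k) (2*k*(2*k-1)/2) (circleGameE k (by omega)) 1 :=
  (circleGameE_playsOncePerRound _).gpLe_one (by omega) _
end
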